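/- arXiv:2410.06683 — 6 statements merged into one kernel-verified Lean document; each statement's English description precedes it below -/
import Mathlib

section
/- Let k ≥ 2, let λ be a length function, let G = (V,E) be a k-cycle graph over n agents with node weights w(v) = |α(v)|·λ(|α(v)|), and let I be a greedy-stable independent set in G. Then every independent set J in G satisfies w(J) ≤ k·w(I). -/
/-!
The `k`-cycle graph framework of Emek–Shpiro, "Barter Exchange with Bounded
Trading Cycles": a `k`-cycle graph over `n` agents is a finite simple graph whose
nodes `v` are labeled by agent sets `α(v) ⊆ [n]` with `2 ≤ |α(v)| ≤ k`, two distinct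
nodes being adjacent iff their labels intersect.
-/

open Finset

/-- A `k`-cycle graph over `n` agents. -/
structure CycleGraph (n k : ℕ) where
  /-- the node set -/
  V : Type
  fintypeV : Fintype V
  decEqV : DecidableEq V
  /-- the agent label of each node -/
  alpha : V → Finset (Fin n)
  two_le_card : ∀ v, 2 ≤ (alpha v).card
  card_le_k : ∀ v, (alpha v).card ≤ k

attribute [instance] CycleGraph.fintypeV CycleGraph.decEqV

namespace CycleGraph

variable {n k : ℕ}

/-- Adjacency: distinct nodes whose agent labels intersect. -/
def Adj (G : CycleGraph n k) (u v : G.V) : Prop :=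
  u ≠ v ∧ ((G.alpha u) ∩ (G.alpha v)).Nonempty

instance (G : CycleGraph n k) : DecidableRel G.Adj := fun u v =>
  inferInstanceAs (Decidable (u ≠ v ∧ ((G.alpha u) ∩ (G.alpha v)).Nonempty))

/-- Independent set: pairwise non-adjacent nodes, i.e., pairwise disjoint labels. -/
def Indep (G : CycleGraph n k) (I : Finset G.V) : Prop :=
  ∀ u ∈ I, ∀ v ∈ I, u ≠ v → G.alpha u ∩ G.alpha v = ∅

instance (G : CycleGraph n k) (I : Finset G.V) : Decidable (G.Indep I) :=
  inferInstanceAs (Decidable (∀ u ∈ I, ∀ v ∈ I, u ≠ v → G.alpha u ∩ G.alpha v = ∅))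

end CycleGraph

/-- An independent set `I` is greedy-stable if every node outside `I` has a neighbor in
`I` of no larger label cardinality (the defining property of the output of the greedy
algorithm that adds non-conflicting nodes in non-decreasing order of `|α(·)|`). -/
def CycleGraph.GreedyStable {n k : ℕ} (G : CycleGraph n k) (I : Finset G.V) : Prop :=
  G.Indep I ∧
    ∀ u : G.V, u ∉ I → ∃ v ∈ I, G.Adj u v ∧ (G.alpha v).card ≤ (G.alpha u).card

/-- A length function for length bound `k`: a non-increasing map `{2,…,k} → (0,1]`. -/
def IsLengthFunction (k : ℕ) (lam : ℕ → ℝ) : Prop :=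
  (∀ ℓ : ℕ, 2 ≤ ℓ → ℓ ≤ k → 0 < lam ℓ ∧ lam ℓ ≤ 1) ∧
    ∀ ℓ ℓ' : ℕ, 2 ≤ ℓ → ℓ ≤ ℓ' → ℓ' ≤ k → lam ℓ' ≤ lam ℓ

/-- The weight of a node set: `w(U) = ∑_{v∈U} |α(v)|·λ(|α(v)|)`. -/
noncomputable def CycleGraph.wt {n k : ℕ} (G : CycleGraph n k) (lam : ℕ → ℝ)
    (U : Finset G.V) : ℝ :=
  ∑ v ∈ U, ((G.alpha v).card : ℝ) * lam (G.alpha v).card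

/-- Greedy approximation.  If `I` is a greedy-stable independent set
of a `k`-cycle graph `G` with weights `w(v) = |α(v)|·λ(|α(v)|)`, then every independent
set `J` satisfies `w(J) ≤ k·w(I)`. -/
theorem greedyStable_approx (n k : ℕ) (hk : 2 ≤ k)
    (lam : ℕ → ℝ) (hlam : IsLengthFunction k lam)
    (G : CycleGraph n k) (I : Finset G.V) (hI : G.GreedyStable I)
    (J : Finset G.V) (hJ : G.Indep J) :
    G.wt lam J ≤ (k : ℝ) * G.wt lam I := by
  classical
  obtain ⟨hIind, hstab⟩ := hI
  obtain ⟨hpos, hmono⟩ := hlam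
  have key : ∀ u : G.V, ∃ v : G.V, u ∈ J →
      v ∈ I ∧ (G.alpha u ∩ G.alpha v).Nonempty ∧ (G.alpha v).card ≤ (G.alpha u).card := by
    intro u
    by_cases h : u ∈ I
    · refine ⟨u, fun _ => ⟨h, ?_, le_rfl⟩⟩
      rw [Finset.inter_self]
      exact Finset.card_pos.mp (lt_of_lt_of_le two_pos (G.two_le_card u))
    · obtain ⟨v, hv, hadj, hc⟩ := hstab u h
      exact ⟨v, fun _ => ⟨hv, hadj.2, hc⟩⟩
  choose f hf using key
  have hmaps : ∀ u ∈ J, f u ∈ I := fun u hu => (hf u hu).1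
  rw [CycleGraph.wt, ← Finset.sum_fiberwise_of_maps_to hmaps, CycleGraph.wt,
    Finset.mul_sum]
  apply Finset.sum_le_sum
  intro v hv
  have h2v := G.two_le_card v
  have hkv := G.card_le_k v
  have hlamv := (hpos (G.alpha v).card h2v hkv).1
  have hterm : ∀ u ∈ J.filter (f · = v),
      ((G.alpha u).card : ℝ) * lam (G.alpha u).card ≤ (k : ℝ) * lam (G.alpha v).card := by
    intro u hu
    rw [Finset.mem_filter] at hu
    obtain ⟨hu, hfu⟩ := hu
    obtain ⟨-, -, hc⟩ := hf u hu
    rw [hfu] at hc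
    have h1 : ((G.alpha u).card : ℝ) ≤ k := by exact_mod_cast G.card_le_k u
    have h2 : lam (G.alpha u).card ≤ lam (G.alpha v).card :=
      hmono _ _ h2v hc (G.card_le_k u)
    have h3 : 0 ≤ lam (G.alpha u).card :=
      le_of_lt (hpos _ (G.two_le_card u) (G.card_le_k u)).1
    calc ((G.alpha u).card : ℝ) * lam (G.alpha u).card
        ≤ (k : ℝ) * lam (G.alpha u).card := mul_le_mul_of_nonneg_right h1 h3
      _ ≤ (k : ℝ) * lam (G.alpha v).card :=
        mul_le_mul_of_nonneg_left h2 (by positivity)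
  have hvne : (G.alpha v).Nonempty :=
    Finset.card_pos.mp (lt_of_lt_of_le two_pos h2v)
  obtain ⟨a0, _⟩ := hvne
  have hex : ∀ u : G.V, ∃ a : Fin n, u ∈ J.filter (f · = v) →
      a ∈ G.alpha u ∩ G.alpha v := by
    intro u
    by_cases h : u ∈ J.filter (f · = v)
    · rw [Finset.mem_filter] at h
      obtain ⟨hu, hfu⟩ := h
      obtain ⟨-, hne, -⟩ := hf u hu
      rw [hfu] at hne
      obtain ⟨a, ha⟩ := hne
      exact ⟨a, fun _ => ha⟩
    · exact ⟨a0, fun h' => absurd h' h⟩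
  choose g hg using hex
  have hcardfiber : (J.filter (f · = v)).card ≤ (G.alpha v).card := by
    apply Finset.card_le_card_of_injOn g
    · intro u hu
      exact Finset.mem_of_mem_inter_right (hg u hu)
    · intro u hu u' hu' heq
      by_contra hne
      have h1 : g u ∈ G.alpha u := Finset.mem_of_mem_inter_left (hg u hu)
      have h2 : g u ∈ G.alpha u' := heq ▸ Finset.mem_of_mem_inter_left (hg u' hu')
      have hu0 := (Finset.mem_filter.mp hu).1
      have hu'0 := (Finset.mem_filter.mp hu').1
      have := hJ u hu0 u' hu'0 hne
      have : g u ∈ G.alpha u ∩ G.alpha u' := Finset.mem_inter.mpr ⟨h1, h2⟩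
      simp_all
  calc ∑ u ∈ J.filter (f · = v), ((G.alpha u).card : ℝ) * lam (G.alpha u).card
      ≤ (J.filter (f · = v)).card • ((k : ℝ) * lam (G.alpha v).card) :=
        Finset.sum_le_card_nsmul _ _ _ hterm
    _ = ((J.filter (f · = v)).card : ℝ) * ((k : ℝ) * lam (G.alpha v).card) := by
        rw [nsmul_eq_mul]
    _ ≤ ((G.alpha v).card : ℝ) * ((k : ℝ) * lam (G.alpha v).card) := by
        apply mul_le_mul_of_nonneg_right (by exact_mod_cast hcardfiber)
        positivity
    _ = (k : ℝ) * (((G.alpha v).card : ℝ) * lam (G.alpha v).card) := by ring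
end

section
/- Let k ≥ 3 and q ≥ 1 be integers, let G = (V,E) be a k-cycle graph over n agents with uniform node weights w(v) = |α(v)|, and let I be an (E,q)-locally optimal independent set in G. Then every independent set O in G satisfies w(O) ≤ (k − 1 + 1/q)·w(I). (This is the approximation guarantee of the local search algorithm LS_q, whose output is exactly such an (E,q)-locally optimal IS.) -/
/-!
The `k`-cycle graph framework of Emek–Shpiro, "Barter Exchange with Bounded
Trading Cycles": a `k`-cycle graph over `n` agents is a finite simple graph whose
nodes `v` are labeled by agent sets `α(v) ⊆ [n]` with `2 ≤ |α(v)| ≤ k`, two distinct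
nodes being adjacent iff their labels intersect.
-/

open Finset

/-- The (closed-out) neighborhood `N_G(U)`: all nodes adjacent to some node of `U`. -/
def CycleGraph.nbhd {n k : ℕ} (G : CycleGraph n k) (U : Finset G.V) : Finset G.V :=
  Finset.univ.filter (fun v => ∃ u ∈ U, G.Adj u v)

/-- `α(U) = ⋃_{v∈U} α(v)`. -/
def CycleGraph.aset {n k : ℕ} (G : CycleGraph n k) (U : Finset G.V) : Finset (Fin n) :=
  U.biUnion G.alpha

/-- An independent set `I` is `(E,q)`-locally optimal if (i) it is a maximal independent
set, and (ii) there is no independent set `X ⊆ N_G(I)` with `|N_G(X) ∩ I| ≤ q` such that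
`I′ = (I ∪ X) ∖ (N_G(X) ∩ I)` is an independent set with `α(I) ⊊ α(I′)`.  (The output of
the local search algorithm `LS_q` is exactly such an independent set.) -/
def CycleGraph.EqLocalOpt {n k : ℕ} (G : CycleGraph n k) (q : ℕ)
    (I : Finset G.V) : Prop :=
  G.Indep I ∧
  (∀ v : G.V, G.Indep (insert v I) → v ∈ I) ∧
  ¬ ∃ X : Finset G.V, X ⊆ G.nbhd I ∧ G.Indep X ∧ (G.nbhd X ∩ I).card ≤ q ∧
      G.Indep ((I ∪ X) \ (G.nbhd X ∩ I)) ∧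
      G.aset I ⊂ G.aset ((I ∪ X) \ (G.nbhd X ∩ I))

/-!
Every node `v` of `O` shares at least one agent with `I` (maximality); write
`ov v = |α(v) ∩ α(I)|` and call `u ∈ I` a blocker of `v` when `α(u)` meets `α(v)`.
Double counting gives `w(I) = Z + ∑_{v ∈ O} (ov v - 1) + |O|`, where `Z` counts the agents
of `I` unused by `O`; with `w(O) ≤ k|O|` and `w(I) ≤ k|I|` it suffices to show
`(q - 1)|I| ≤ q (Z + ∑ (ov v - 1))`. This is checked on each connected component `C` of the
hypergraph on `I` whose edges are the blocker sets, which satisfies `|C| ≤ 1 + ∑ (ov v - 1)`.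
The only nontrivial case is `C` fully used by `O` and `|C| ≤ q`: then a node of `O` with
`ov = 1` blocked inside `C` would make swapping in all nodes of `O \ I` blocked only inside `C`
an improvement, so all those nodes have `ov ≥ 2`, and `|α(u)| ≥ 2` gives `|C| ≤ ∑ (ov v - 1)`.
-/

section Hypergraph

variable {ι κ : Type*} [DecidableEq ι] (R : Finset κ) (e : κ → Finset ι)

/-- `C` is a union of connected components of the hypergraph with edges `e v`, `v ∈ R`. -/
def EdgeClosed (C : Finset ι) : Prop :=
  ∀ v ∈ R, (e v ∩ C).Nonempty → e v ⊆ C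

variable {R e}

theorem EdgeClosed.sdiff {I C : Finset ι} (hI : EdgeClosed R e I) (hC : EdgeClosed R e C) :
    EdgeClosed R e (I \ C) := by
  intro v hv ⟨x, hx⟩
  obtain ⟨hxe, hxI, hxC⟩ : x ∈ e v ∧ x ∈ I ∧ x ∉ C := by simpa using hx
  have hdisj : Disjoint (e v) C := by
    rw [disjoint_iff_inter_eq_empty, ← not_nonempty_iff_eq_empty]
    exact fun hmeet => hxC (hC v hv hmeet hxe)
  exact subset_sdiff.mpr ⟨hI v hv ⟨x, mem_inter.mpr ⟨hxe, hxI⟩⟩, hdisj⟩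

theorem exists_edgeClosed_card_le {I : Finset ι} (hI : EdgeClosed R e I) (hIne : I.Nonempty) :
    ∃ C ⊆ I, C.Nonempty ∧ EdgeClosed R e C ∧
      C.card ≤ 1 + ∑ v ∈ R with e v ⊆ C, ((e v).card - 1) := by
  classical
  set T := I.powerset.filter fun S =>
    S.Nonempty ∧ S.card ≤ 1 + ∑ v ∈ R with e v ⊆ S, ((e v).card - 1)
  obtain ⟨u, hu⟩ := hIne
  obtain ⟨C, hCT, hCmax⟩ := T.exists_max_image card ⟨{u}, by simp [T, hu]⟩
  obtain ⟨hCI, hCne, hCcard⟩ : C ⊆ I ∧ C.Nonempty ∧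
      C.card ≤ 1 + ∑ v ∈ R with e v ⊆ C, ((e v).card - 1) := by simpa [T] using hCT
  refine ⟨C, hCI, hCne, fun v hv hmeet => ?_, hCcard⟩
  -- A largest piece obeying the bound is closed: adding an edge that meets it keeps the bound.
  by_contra hvC
  have hmeet' : 1 ≤ (C ∩ e v).card := card_pos.mpr (by rwa [inter_comm])
  have hunion := card_union_add_card_inter C (e v)
  have hinter : (C ∩ e v).card ≤ (e v).card := card_le_card inter_subset_right
  have hsum : (e v).card - 1 + ∑ w ∈ R with e w ⊆ C, ((e w).card - 1) ≤
      ∑ w ∈ R with e w ⊆ C ∪ e v, ((e w).card - 1) := by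
    rw [← sum_insert (f := fun w => (e w).card - 1) (by simp [hvC])]
    refine sum_le_sum_of_subset fun w hw => ?_
    rcases mem_insert.mp hw with rfl | hw
    · simp [hv]
    · simp only [mem_filter] at hw ⊢
      exact ⟨hw.1, hw.2.trans subset_union_left⟩
  have hgrow : C ∪ e v ∈ T := by
    simp only [T, mem_filter, mem_powerset]
    exact ⟨union_subset hCI (hI v hv (hmeet.mono (inter_subset_inter_left hCI))),
      hCne.mono subset_union_left, by omega⟩
  have hlt : C.card < (C ∪ e v).card :=
    card_lt_card (Finset.ssubset_iff_subset_ne.mpr ⟨subset_union_left,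
      fun h => hvC (h ▸ subset_union_right)⟩)
  exact absurd (hCmax _ hgrow) (not_le.mpr hlt)

theorem sum_filter_subset_eq_add_sdiff {I C : Finset ι} (he : ∀ v ∈ R, (e v).Nonempty)
    {M : Type*} [AddCommMonoid M] (c : κ → M) (hCI : C ⊆ I) (hC : EdgeClosed R e C) :
    ∑ v ∈ R with e v ⊆ I, c v = ∑ v ∈ R with e v ⊆ C, c v + ∑ v ∈ R with e v ⊆ I \ C, c v := by
  classical
  rw [← sum_union (disjoint_filter.mpr fun v hv hvC hvD =>
      (he v hv).ne_empty (subset_empty.mp (by simpa using subset_inter hvC hvD))),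
    ← filter_or]
  refine sum_congr (filter_congr fun v hv => ⟨fun hvI => ?_, ?_⟩) fun _ _ => rfl
  · by_cases hmeet : (e v ∩ C).Nonempty
    · exact Or.inl (hC v hv hmeet)
    · refine Or.inr (subset_sdiff.mpr ⟨hvI, ?_⟩)
      rwa [disjoint_iff_inter_eq_empty, ← not_nonempty_iff_eq_empty]
  · rintro (h | h)
    · exact h.trans hCI
    · exact h.trans sdiff_subset

theorem sum_le_of_edgeClosed {M : Type*} [AddCommMonoid M] [PartialOrder M]
    [IsOrderedAddMonoid M] (he : ∀ v ∈ R, (e v).Nonempty) (a b : ι → M) (c : κ → M)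
    {I : Finset ι} (hI : EdgeClosed R e I)
    (h : ∀ C ⊆ I, C.Nonempty → EdgeClosed R e C →
      C.card ≤ 1 + ∑ v ∈ R with e v ⊆ C, ((e v).card - 1) →
      ∑ u ∈ C, a u ≤ ∑ u ∈ C, b u + ∑ v ∈ R with e v ⊆ C, c v) :
    ∑ u ∈ I, a u ≤ ∑ u ∈ I, b u + ∑ v ∈ R with e v ⊆ I, c v := by
  induction I using Finset.strongInduction with
  | H I ih =>
  rcases I.eq_empty_or_nonempty with rfl | hIne
  · simp [filter_false_of_mem fun v hv => (he v hv).ne_empty]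
  obtain ⟨C, hCI, hCne, hC, hCcard⟩ := exists_edgeClosed_card_le hI hIne
  have hrest := ih (I \ C) (sdiff_ssubset hCI hCne) (hI.sdiff hC)
    fun C' hC' => h C' (hC'.trans sdiff_subset)
  rw [← sum_sdiff hCI, ← sum_sdiff hCI (f := b), sum_filter_subset_eq_add_sdiff he c hCI hC]
  calc ∑ u ∈ I \ C, a u + ∑ u ∈ C, a u
      ≤ (∑ u ∈ I \ C, b u + ∑ v ∈ R with e v ⊆ I \ C, c v) +
          (∑ u ∈ C, b u + ∑ v ∈ R with e v ⊆ C, c v) :=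
        add_le_add hrest (h C hCI hCne hC hCcard)
    _ = _ := by abel

end Hypergraph

theorem Nat.sub_one_mul_le_mul {q c s : ℕ} (h₁ : c ≤ s + 1) (h₂ : c ≤ s ∨ q < c) :
    (q - 1) * c ≤ q * s := by
  obtain _ | p := q
  · simp
  rw [add_tsub_cancel_right]
  rcases h₂ with h₂ | h₂ <;> nlinarith

theorem le_approx_ratio_mul {k q i o s wI wO : ℕ} (hq : 1 ≤ q) (hwO : wO ≤ k * o)
    (hwI : wI ≤ k * i) (hw : wI = s + o) (hkey : (q - 1) * i ≤ q * s) :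
    (wO : ℝ) ≤ ((k : ℝ) - 1 + 1 / (q : ℝ)) * wI := by
  obtain ⟨p, rfl⟩ : ∃ p, q = p + 1 := ⟨q - 1, by omega⟩
  rw [add_tsub_cancel_right] at hkey
  have hmain : (p + 1) * wO + p * wI ≤ (p + 1) * k * wI := by
    subst hw
    nlinarith [Nat.mul_le_mul_left (p + 1) hwO, Nat.mul_le_mul_left p hwI,
      Nat.mul_le_mul_left k hkey]
  have hmain' : ((p : ℝ) + 1) * wO + p * wI ≤ (p + 1) * k * wI := by exact_mod_cast hmain
  rw [Nat.cast_add, Nat.cast_one, ← sub_nonneg]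
  have hp : (0 : ℝ) < p + 1 := by positivity
  have : ((k : ℝ) - 1 + 1 / (p + 1)) * wI - wO =
      (((p : ℝ) + 1) * k * wI - ((p + 1) * wO + p * wI)) / (p + 1) := by
    field_simp
    ring
  rw [this]
  exact div_nonneg (by linarith) hp.le

namespace CycleGraph

variable {n k : ℕ} (G : CycleGraph n k)

def blockers (I : Finset G.V) (v : G.V) : Finset G.V :=
  I.filter fun u => (G.alpha v ∩ G.alpha u).Nonempty

def overlap (I : Finset G.V) (v : G.V) : ℕ :=
  (G.alpha v ∩ G.aset I).card

/-- The set `I′` of a local search step. -/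
def swap (I X : Finset G.V) : Finset G.V :=
  (I ∪ X) \ (G.nbhd X ∩ I)

variable {G} {I O X : Finset G.V}

theorem Indep.mono (hO : G.Indep O) (hXO : X ⊆ O) : G.Indep X :=
  fun u hu v hv => hO u (hXO hu) v (hXO hv)

theorem Indep.card_inter_aset (hI : G.Indep I) (B : Finset (Fin n)) :
    (B ∩ G.aset I).card = ∑ u ∈ I, (B ∩ G.alpha u).card := by
  rw [aset, inter_biUnion]
  refine card_biUnion fun u hu u' hu' huu' => ?_
  exact disjoint_of_subset_left inter_subset_right (disjoint_of_subset_right inter_subset_right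
    (disjoint_iff_inter_eq_empty.mpr (hI u hu u' hu' huu')))

theorem Indep.overlap_eq_sum (hI : G.Indep I) (v : G.V) :
    G.overlap I v = ∑ u ∈ I, (G.alpha v ∩ G.alpha u).card :=
  hI.card_inter_aset _

theorem overlap_of_mem {v : G.V} (hv : v ∈ I) : G.overlap I v = (G.alpha v).card := by
  rw [overlap, aset, inter_eq_left.mpr (subset_biUnion_of_mem G.alpha hv)]

theorem alpha_nonempty (v : G.V) : (G.alpha v).Nonempty :=
  card_pos.mp (by linarith [G.two_le_card v])

theorem Indep.card_blockers_le_overlap (hI : G.Indep I) (v : G.V) :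
    (G.blockers I v).card ≤ G.overlap I v := by
  rw [hI.overlap_eq_sum, card_eq_sum_ones, blockers, sum_filter]
  exact sum_le_sum fun u _ => by split_ifs with h <;> simp [h]

theorem Indep.blockers_nonempty (hI : G.Indep I) (hmax : ∀ v, G.Indep (insert v I) → v ∈ I)
    (v : G.V) : (G.blockers I v).Nonempty := by
  by_contra hv
  simp only [blockers, not_nonempty_iff_eq_empty, filter_eq_empty_iff] at hv
  have hvI : v ∉ I := fun h => (G.alpha_nonempty v).ne_empty (by simpa using hv h)
  refine hvI (hmax v fun x hx y hy hxy => ?_)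
  rcases mem_insert.mp hx with rfl | hxI <;> rcases mem_insert.mp hy with rfl | hyI
  · exact absurd rfl hxy
  · exact hv hyI
  · rw [inter_comm]; exact hv hxI
  · exact hI x hxI y hyI hxy

theorem sum_card_inter_aset_eq (hI : G.Indep I) (hO : G.Indep O) {C : Finset G.V} (hCI : C ⊆ I)
    (hC : EdgeClosed O (G.blockers I) C) :
    ∑ u ∈ C, (G.alpha u ∩ G.aset O).card = ∑ v ∈ O with G.blockers I v ⊆ C, G.overlap I v := by
  have hzero : ∀ v u, u ∈ I → u ∉ G.blockers I v → (G.alpha v ∩ G.alpha u).card = 0 :=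
    fun v u hu hub => card_eq_zero.mpr (not_nonempty_iff_eq_empty.mp fun h =>
      hub (mem_filter.mpr ⟨hu, h⟩))
  rw [sum_congr rfl fun u _ => hO.card_inter_aset (G.alpha u), sum_comm, sum_filter]
  refine sum_congr rfl fun v hv => ?_
  simp_rw [inter_comm (G.alpha _) (G.alpha v)]
  split_ifs with hvC
  · rw [hI.overlap_eq_sum]
    exact sum_subset hCI fun u huI huC => hzero v u huI fun hub => huC (hvC hub)
  · refine sum_eq_zero fun u huC => hzero v u (hCI huC) fun hub => hvC (hC v hv ⟨u, ?_⟩)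
    exact mem_inter.mpr ⟨hub, huC⟩

theorem mem_nbhd {u : G.V} : u ∈ G.nbhd X ↔ ∃ x ∈ X, G.Adj x u := by
  simp [nbhd]

theorem Indep.eq_of_inter_nonempty (hI : G.Indep I) {u v : G.V} (hu : u ∈ I) (hv : v ∈ I)
    (hmeet : (G.alpha u ∩ G.alpha v).Nonempty) : u = v := by
  by_contra huv
  exact hmeet.ne_empty (hI u hu v hv huv)

theorem Indep.disjoint_nbhd (hX : G.Indep X) : Disjoint X (G.nbhd X) := by
  refine disjoint_left.mpr fun x hx hxN => ?_
  obtain ⟨x', hx', hne, hmeet⟩ := mem_nbhd.mp hxN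
  exact hne (hX.eq_of_inter_nonempty hx' hx hmeet)

theorem subset_swap (hX : G.Indep X) : X ⊆ G.swap I X := fun _ hx =>
  mem_sdiff.mpr ⟨mem_union_right _ hx, fun h =>
    disjoint_left.mp hX.disjoint_nbhd hx (mem_inter.mp h).1⟩

theorem Indep.swap (hI : G.Indep I) (hX : G.Indep X) : G.Indep (G.swap I X) := by
  have hmeet : ∀ x ∈ X, ∀ u ∈ I, u ∉ G.nbhd X ∩ I → x ≠ u → G.alpha x ∩ G.alpha u = ∅ := by
    intro x hx u hu huN hxu
    by_contra hne
    exact huN (mem_inter.mpr ⟨mem_nbhd.mpr ⟨x, hx, hxu, nonempty_iff_ne_empty.mpr hne⟩, hu⟩)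
  intro a ha b hb hab
  obtain ⟨haIX, haN⟩ := mem_sdiff.mp ha
  obtain ⟨hbIX, hbN⟩ := mem_sdiff.mp hb
  rcases mem_union.mp haIX with haI | haX <;> rcases mem_union.mp hbIX with hbI | hbX
  · exact hI a haI b hbI hab
  · rw [inter_comm]; exact hmeet b hbX a haI haN (Ne.symm hab)
  · exact hmeet a haX b hbI hbN hab
  · exact hX a haX b hbX hab

theorem aset_subset_aset_swap (hX : G.Indep X)
    (hcov : ∀ u ∈ G.nbhd X ∩ I, G.alpha u ⊆ G.aset X) : G.aset I ⊆ G.aset (G.swap I X) := by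
  intro a ha
  obtain ⟨u, huI, hau⟩ := mem_biUnion.mp ha
  by_cases huN : u ∈ G.nbhd X ∩ I
  · obtain ⟨x, hx, hax⟩ := mem_biUnion.mp (hcov u huN hau)
    exact mem_biUnion.mpr ⟨x, subset_swap hX hx, hax⟩
  · exact mem_biUnion.mpr ⟨u, mem_sdiff.mpr ⟨mem_union_left _ huI, huN⟩, hau⟩

theorem Indep.one_le_overlap (hI : G.Indep I) (hmax : ∀ v, G.Indep (insert v I) → v ∈ I)
    (v : G.V) : 1 ≤ G.overlap I v :=
  (card_pos.mpr (hI.blockers_nonempty hmax v)).trans_le (hI.card_blockers_le_overlap v)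

theorem Indep.sum_card_alpha_eq (hI : G.Indep I) (hmax : ∀ v, G.Indep (insert v I) → v ∈ I)
    (hO : G.Indep O) :
    ∑ u ∈ I, (G.alpha u).card =
      ∑ u ∈ I, (G.alpha u \ G.aset O).card + ∑ v ∈ O, (G.overlap I v - 1) + O.card := by
  have hall : ∀ v ∈ O, G.blockers I v ⊆ I := fun v _ => filter_subset _ _
  have hshared := sum_card_inter_aset_eq hI hO subset_rfl fun v hv _ => hall v hv
  rw [filter_true_of_mem hall] at hshared
  rw [add_assoc, card_eq_sum_ones, ← sum_add_distrib,
    sum_congr rfl fun v _ => Nat.sub_add_cancel (hI.one_le_overlap hmax v), ← hshared,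
    ← sum_add_distrib]
  exact sum_congr rfl fun u _ => (card_sdiff_add_card_inter _ _).symm

theorem sum_card_alpha_le (U : Finset G.V) : ∑ u ∈ U, (G.alpha u).card ≤ k * U.card :=
  (sum_le_card_nsmul _ _ _ fun u _ => G.card_le_k u).trans_eq (by rw [smul_eq_mul, mul_comm])

variable {q : ℕ} {C : Finset G.V}

theorem EqLocalOpt.two_le_overlap (hI : G.EqLocalOpt q I) (hO : G.Indep O) (hCq : C.card ≤ q)
    (hC : EdgeClosed O (G.blockers I) C)
    (hcov : ∀ u ∈ C, G.alpha u ⊆ G.aset O) {v : G.V} (hv : v ∈ O) (hvC : G.blockers I v ⊆ C) :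
    2 ≤ G.overlap I v := by
  obtain ⟨hIind, hmax, hnoswap⟩ := hI
  by_contra hlt
  have hfresh : ¬ G.alpha v ⊆ G.aset I := fun h =>
    hlt (by rw [overlap, inter_eq_left.mpr h]; exact G.two_le_card v)
  obtain ⟨a, hav, haI⟩ := not_subset.mp hfresh
  have hvI : v ∉ I := fun h => hfresh (subset_biUnion_of_mem G.alpha h)
  -- Swapping these nodes in would be an improving move.
  set X := O.filter fun x => x ∉ I ∧ G.blockers I x ⊆ C
  have hX : G.Indep X := hO.mono (filter_subset _ _)
  have hvX : v ∈ X := mem_filter.mpr ⟨hv, hvI, hvC⟩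
  have hNC : G.nbhd X ∩ I ⊆ C := by
    intro u hu
    obtain ⟨x, hx, -, hmeet⟩ := mem_nbhd.mp (mem_inter.mp hu).1
    exact (mem_filter.mp hx).2.2 (mem_filter.mpr ⟨(mem_inter.mp hu).2, hmeet⟩)
  have hcovX : ∀ u ∈ G.nbhd X ∩ I, G.alpha u ⊆ G.aset X := by
    intro u hu b hb
    obtain ⟨huN, huI⟩ := mem_inter.mp hu
    obtain ⟨w, hw, hbw⟩ := mem_biUnion.mp (hcov u (hNC hu) hb)
    have hwC : G.blockers I w ⊆ C :=
      hC w hw ⟨u, mem_inter.mpr ⟨mem_filter.mpr ⟨huI, b, mem_inter.mpr ⟨hbw, hb⟩⟩, hNC hu⟩⟩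
    -- A node of `I ∩ O` serving `b ∈ α(u)` would be `u` itself, yet `u` meets a node of `X ⊆ O`.
    have hwI : w ∉ I := by
      intro hwI
      obtain rfl := hIind.eq_of_inter_nonempty hwI huI ⟨b, mem_inter.mpr ⟨hbw, hb⟩⟩
      obtain ⟨x, hx, hxw, hmeet⟩ := mem_nbhd.mp huN
      exact hxw (hO.eq_of_inter_nonempty (mem_filter.mp hx).1 hw hmeet)
    exact mem_biUnion.mpr ⟨w, mem_filter.mpr ⟨hw, hwI, hwC⟩, hbw⟩
  refine hnoswap ⟨X, fun x hx => ?_, hX, (card_le_card hNC).trans hCq, hIind.swap hX,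
    (aset_subset_aset_swap hX hcovX).ssubset_of_not_subset fun h =>
      haI (h (mem_biUnion.mpr ⟨v, subset_swap hX hvX, hav⟩))⟩
  obtain ⟨u, hu⟩ := hIind.blockers_nonempty hmax x
  obtain ⟨huI, hmeet⟩ := mem_filter.mp hu
  exact mem_nbhd.mpr ⟨u, huI, fun h => (mem_filter.mp hx).2.1 (h ▸ huI), by rwa [inter_comm]⟩

theorem EqLocalOpt.card_le_sum_overlap (hI : G.EqLocalOpt q I) (hO : G.Indep O) (hCI : C ⊆ I)
    (hCq : C.card ≤ q) (hC : EdgeClosed O (G.blockers I) C)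
    (hcov : ∀ u ∈ C, G.alpha u ⊆ G.aset O) :
    C.card ≤ ∑ v ∈ O with G.blockers I v ⊆ C, (G.overlap I v - 1) := by
  have h2 : ∀ v ∈ O.filter (G.blockers I · ⊆ C), 2 ≤ G.overlap I v := fun v hv =>
    hI.two_le_overlap hO hCq hC hcov (mem_filter.mp hv).1 (mem_filter.mp hv).2
  have : 2 * C.card ≤ 2 * ∑ v ∈ O with G.blockers I v ⊆ C, (G.overlap I v - 1) :=
    calc 2 * C.card = ∑ _u ∈ C, 2 := by rw [sum_const, smul_eq_mul, mul_comm]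
      _ ≤ ∑ u ∈ C, (G.alpha u).card := sum_le_sum fun u _ => G.two_le_card u
      _ = ∑ u ∈ C, (G.alpha u ∩ G.aset O).card :=
        sum_congr rfl fun u hu => by rw [inter_eq_left.mpr (hcov u hu)]
      _ = ∑ v ∈ O with G.blockers I v ⊆ C, G.overlap I v := sum_card_inter_aset_eq hI.1 hO hCI hC
      _ ≤ ∑ v ∈ O with G.blockers I v ⊆ C, 2 * (G.overlap I v - 1) :=
        sum_le_sum fun v hv => by have := h2 v hv; omega
      _ = 2 * ∑ v ∈ O with G.blockers I v ⊆ C, (G.overlap I v - 1) := (mul_sum _ _ _).symm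
  omega

theorem EqLocalOpt.sub_one_mul_card_le (hI : G.EqLocalOpt q I) (hO : G.Indep O) (hCI : C ⊆ I)
    (hC : EdgeClosed O (G.blockers I) C)
    (hsize : C.card ≤ 1 + ∑ v ∈ O with G.blockers I v ⊆ C, ((G.blockers I v).card - 1)) :
    (q - 1) * C.card ≤ q * (∑ u ∈ C, (G.alpha u \ G.aset O).card +
      ∑ v ∈ O with G.blockers I v ⊆ C, (G.overlap I v - 1)) := by
  set Z := ∑ u ∈ C, (G.alpha u \ G.aset O).card
  set E := ∑ v ∈ O with G.blockers I v ⊆ C, (G.overlap I v - 1)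
  have hCE : C.card ≤ 1 + E := hsize.trans (Nat.add_le_add_left (sum_le_sum fun v _ =>
    Nat.sub_le_sub_right (hI.1.card_blockers_le_overlap v) 1) 1)
  refine Nat.sub_one_mul_le_mul (by omega) ?_
  by_contra! h
  have hZ : Z = 0 := by omega
  have hcov : ∀ u ∈ C, G.alpha u ⊆ G.aset O := fun u hu =>
    sdiff_eq_empty_iff_subset.mp (card_eq_zero.mp (sum_eq_zero_iff.mp hZ u hu))
  have := hI.card_le_sum_overlap hO hCI h.2 hC hcov
  omega

theorem EqLocalOpt.sub_one_mul_card_le_mul (hI : G.EqLocalOpt q I) (hO : G.Indep O) :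
    (q - 1) * I.card ≤
      q * (∑ u ∈ I, (G.alpha u \ G.aset O).card + ∑ v ∈ O, (G.overlap I v - 1)) := by
  have hall : ∀ v ∈ O, G.blockers I v ⊆ I := fun v _ => filter_subset _ _
  have := sum_le_of_edgeClosed (fun v _ => hI.1.blockers_nonempty hI.2.1 v) (fun _ => q - 1)
    (fun u => q * (G.alpha u \ G.aset O).card) (fun v => q * (G.overlap I v - 1))
    (fun v hv _ => hall v hv) fun C hCI _ hC hsize => by
      simpa [mul_sum, mul_add, mul_comm] using hI.sub_one_mul_card_le hO hCI hC hsize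
  simpa [filter_true_of_mem hall, mul_sum, mul_add, mul_comm] using this

end CycleGraph

theorem eqLocalOpt_approx_general (n k q : ℕ) (hq : 1 ≤ q)
    (G : CycleGraph n k) (I : Finset G.V) (hI : G.EqLocalOpt q I)
    (O : Finset G.V) (hO : G.Indep O) :
    (∑ v ∈ O, ((G.alpha v).card : ℝ)) ≤
      ((k : ℝ) - 1 + 1 / (q : ℝ)) * ∑ v ∈ I, ((G.alpha v).card : ℝ) := by
  push_cast [← Nat.cast_sum]
  exact le_approx_ratio_mul hq (G.sum_card_alpha_le O) (G.sum_card_alpha_le I)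
    (hI.1.sum_card_alpha_eq hI.2.1 hO) (hI.sub_one_mul_card_le_mul hO)

/-- Theorem: approximation ratio of `LS_q`.  Let `k ≥ 3`, `q ≥ 1`,
let `G` be a `k`-cycle graph with uniform node weights `w(v) = |α(v)|`, and let `I` be an
`(E,q)`-locally optimal independent set.  Then every independent set `O` satisfies
`w(O) ≤ (k − 1 + 1/q)·w(I)`. -/
theorem eqLocalOpt_approx (n k q : ℕ) (hk : 3 ≤ k) (hq : 1 ≤ q)
    (G : CycleGraph n k) (I : Finset G.V) (hI : G.EqLocalOpt q I)
    (O : Finset G.V) (hO : G.Indep O) :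
    (∑ v ∈ O, ((G.alpha v).card : ℝ)) ≤
      ((k : ℝ) - 1 + 1 / (q : ℝ)) * ∑ v ∈ I, ((G.alpha v).card : ℝ) :=
  eqLocalOpt_approx_general n k q hq G I hI O hO
end

section
/- For every length bound k ≥ 3, every INPA algorithm for the k-maxCGIS problem (i.e., the (k,λ)-maxCGIS problem with the uniform length function λ ≡ 1) is truthful. -/
/-!
The `(k,λ)`-maxCGIS framework of Emek–Shpiro, "Barter Exchange with Bounded Trading
Cycles".  A potential node over `[n]` is a cyclic order of between `2` and `k` distinct
agents, formalized as a cyclic permutation of `Fin n` whose support has size in `[2,k]`;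
its agent set `α(c)` is the support.  A `k`-cycle graph is identified with a finite set
of potential nodes, two distinct nodes being adjacent iff their agent sets intersect,
and `G[V∖S]` is the graph on node set `V ∖ S`.
-/

open Finset

namespace MaxCGIS

/-- A potential node over `[n]` with length bound `k`: a cyclic order of between `2`
and `k` distinct agents of `[n]`. -/
def Node (n k : ℕ) : Type :=
  {σ : Equiv.Perm (Fin n) // σ.IsCycle ∧ 2 ≤ σ.support.card ∧ σ.support.card ≤ k}

instance {n k : ℕ} : DecidableEq (Node n k) := Subtype.instDecidableEq

/-- The agent set `α(c)` of a node. -/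
def alpha {n k : ℕ} (c : Node n k) : Finset (Fin n) := c.val.support

/-- `α(I) = ⋃_{v∈I} α(v)`. -/
def aset {n k : ℕ} (I : Finset (Node n k)) : Finset (Fin n) := I.biUnion alpha

/-- Independent set: pairwise non-adjacent nodes, i.e., pairwise disjoint agent sets. -/
def Indep {n k : ℕ} (I : Finset (Node n k)) : Prop :=
  ∀ u ∈ I, ∀ v ∈ I, u ≠ v → alpha u ∩ alpha v = ∅

instance {n k : ℕ} (I : Finset (Node n k)) : Decidable (Indep I) :=
  inferInstanceAs (Decidable (∀ u ∈ I, ∀ v ∈ I, u ≠ v → alpha u ∩ alpha v = ∅))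

/-- The utility of agent `i` from an independent set `I` under the length function
`lam`: `lam |α(v)|` if `I ∩ α⁻¹(i) = {v}`, and `0` if `I ∩ α⁻¹(i) = ∅` (for an
independent set, at most one node of `I` contains `i`). -/
noncomputable def util {n k : ℕ} (lam : ℕ → ℝ) (i : Fin n) (I : Finset (Node n k)) : ℝ :=
  ∑ v ∈ I.filter (fun v => i ∈ alpha v), lam (alpha v).card

/-- The weight `w(I) = ∑_{v∈I} |α(v)|·λ(|α(v)|)`. -/
noncomputable def wt {n k : ℕ} (lam : ℕ → ℝ) (I : Finset (Node n k)) : ℝ :=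
  ∑ v ∈ I, ((alpha v).card : ℝ) * lam (alpha v).card

/-- A length function for length bound `k`: a non-increasing map `{2,…,k} → (0,1]`. -/
def IsLengthFunction (k : ℕ) (lam : ℕ → ℝ) : Prop :=
  (∀ ℓ : ℕ, 2 ≤ ℓ → ℓ ≤ k → 0 < lam ℓ ∧ lam ℓ ≤ 1) ∧
    ∀ ℓ ℓ' : ℕ, 2 ≤ ℓ → ℓ ≤ ℓ' → ℓ' ≤ k → lam ℓ' ≤ lam ℓ

/-- A `(k,λ)`-maxCGIS algorithm assigns an output node set to every number of agents
`n` and every `k`-cycle graph (i.e., finite set of potential nodes) over `n` agents. -/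
abbrev Algorithm (k : ℕ) : Type :=
  (n : ℕ) → Finset (Node n k) → Finset (Node n k)

/-- A valid algorithm outputs an independent set of the input graph. -/
def IsAlgorithm {k : ℕ} (Alg : Algorithm k) : Prop :=
  ∀ (n : ℕ) (G : Finset (Node n k)), Alg n G ⊆ G ∧ Indep (Alg n G)

/-- Truthfulness: no agent `i` can increase her utility by hiding a set `S ⊆ α⁻¹(i)`
of nodes she partakes in. -/
def TruthfulAlg {k : ℕ} (lam : ℕ → ℝ) (Alg : Algorithm k) : Prop :=
  ∀ (n : ℕ) (G : Finset (Node n k)) (i : Fin n) (S : Finset (Node n k)),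
    (∀ v ∈ S, i ∈ alpha v) →
      util lam i (Alg n (G \ S)) ≤ util lam i (Alg n G)

/-- INPA (independence of non-partaking agents): if agent `i` does not partake in the
output on `G`, then removing any set `S ⊆ α⁻¹(i)` of nodes does not change the output. -/
def INPAAlg {k : ℕ} (Alg : Algorithm k) : Prop :=
  ∀ (n : ℕ) (G : Finset (Node n k)) (i : Fin n),
    i ∉ aset (Alg n G) →
      ∀ S : Finset (Node n k), (∀ v ∈ S, i ∈ alpha v) →
        Alg n (G \ S) = Alg n G

/-- `Alg` admits approximation ratio `r ≥ 1` for the `(k,λ)`-maxCGIS problem. -/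
def ApproxAlg {k : ℕ} (lam : ℕ → ℝ) (Alg : Algorithm k) (r : ℝ) : Prop :=
  1 ≤ r ∧
    ∀ (n : ℕ) (G I : Finset (Node n k)), I ⊆ G → Indep I →
      wt lam (Alg n G) ≥ (1 / r) * wt lam I

/-- Observation: INPA implies truthfulness for uniform lengths.
For every length bound `k ≥ 3`, every INPA algorithm for the `k`-maxCGIS problem
(the `(k,λ)`-maxCGIS problem with the uniform length function `λ ≡ 1`) is truthful. -/
theorem inpa_implies_truthful_uniform
    (k : ℕ) (hk : 3 ≤ k) (Alg : Algorithm k)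
    (halg : IsAlgorithm Alg) (hinpa : INPAAlg Alg) :
    TruthfulAlg (fun _ => (1 : ℝ)) Alg := by
  -- util with uniform lam is the cardinality of the filter, which is ≤ 1 on an
  -- independent set.
  have hutil_le_one : ∀ (n : ℕ) (I : Finset (Node n k)) (i : Fin n),
      Indep I → util (fun _ => (1 : ℝ)) i I ≤ 1 := by
    intro n I i hI
    have hcard : (I.filter (fun v => i ∈ alpha v)).card ≤ 1 := by
      rw [Finset.card_le_one]
      intro u hu v hv
      simp only [Finset.mem_filter] at hu hv
      by_contra hne
      have := hI u hu.1 v hv.1 hne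
      have : i ∈ alpha u ∩ alpha v := Finset.mem_inter.2 ⟨hu.2, hv.2⟩
      rw [hI u hu.1 v hv.1 hne] at this
      exact absurd this (Finset.notMem_empty i)
    calc util (fun _ => (1 : ℝ)) i I
        = ((I.filter (fun v => i ∈ alpha v)).card : ℝ) := by
          simp [util]
      _ ≤ 1 := by exact_mod_cast hcard
  intro n G i S hS
  by_cases hi : i ∈ aset (Alg n G)
  · -- util on G is 1
    obtain ⟨v, hv, hiv⟩ := Finset.mem_biUnion.1 hi
    have h1 : (1 : ℝ) ≤ util (fun _ => (1 : ℝ)) i (Alg n G) := by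
      have hne : v ∈ (Alg n G).filter (fun v => i ∈ alpha v) :=
        Finset.mem_filter.2 ⟨hv, hiv⟩
      have : 1 ≤ ((Alg n G).filter (fun v => i ∈ alpha v)).card :=
        Finset.card_pos.2 ⟨v, hne⟩
      calc (1 : ℝ) ≤ (((Alg n G).filter (fun v => i ∈ alpha v)).card : ℝ) := by
            exact_mod_cast this
        _ = util (fun _ => (1 : ℝ)) i (Alg n G) := by simp [util]
    exact le_trans (hutil_le_one n _ i (halg n (G \ S)).2) h1
  · rw [hinpa n G i hi S hS]



end MaxCGIS
end

section
/- Let Alg be the local search algorithm for the (k,λ)-maxCGIS problem characterized by a list R = (r_1,…,r_m) of improvement rules. If every improvement rule in R is loyal and INPA, then Alg is INPA. -/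
/-!
The `(k,λ)`-maxCGIS framework of Emek–Shpiro, "Barter Exchange with Bounded Trading
Cycles".  A potential node over `[n]` is a cyclic order of between `2` and `k` distinct
agents, formalized as a cyclic permutation of `Fin n` whose support has size in `[2,k]`;
its agent set `α(c)` is the support.  A `k`-cycle graph is identified with a finite set
of potential nodes, two distinct nodes being adjacent iff their agent sets intersect,
and `G[V∖S]` is the graph on node set `V ∖ S`.
-/

open Finset

namespace MaxCGIS

/-- An improvement rule maps a pair (graph, independent set) either to an improved
independent set or to `⊥` (here `none`). -/
abbrev Rule (k : ℕ) : Type :=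
  (n : ℕ) → Finset (Node n k) → Finset (Node n k) → Option (Finset (Node n k))

/-- A valid improvement rule: on any independent set `I` of `G`, if it returns `I′`
then `I′` is an independent set of `G` of strictly larger weight. -/
def ValidRule {k : ℕ} (lam : ℕ → ℝ) (r : Rule k) : Prop :=
  ∀ (n : ℕ) (G I : Finset (Node n k)), I ⊆ G → Indep I →
    ∀ I' : Finset (Node n k), r n G I = some I' →
      I' ⊆ G ∧ Indep I' ∧ wt lam I < wt lam I'

/-- Loyal: every agent partaking in `I` also partakes in the improved set. -/
def LoyalRule {k : ℕ} (r : Rule k) : Prop :=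
  ∀ (n : ℕ) (G I I' : Finset (Node n k)), r n G I = some I' → aset I ⊆ aset I'

/-- INPA improvement rule: (1) if `r(G,I) = I′` then `r(G[V∖S], I) = I′` for every
agent `i ∉ α(I) ∪ α(I′)` and every `S ⊆ α⁻¹(i)`; (2) if `r(G,I) = ⊥` then
`r(G[V∖S], I) = ⊥` for every agent `i ∉ α(I)` and every `S ⊆ α⁻¹(i)`. -/
def INPARule {k : ℕ} (r : Rule k) : Prop :=
  (∀ (n : ℕ) (G I I' : Finset (Node n k)) (i : Fin n) (S : Finset (Node n k)),
      r n G I = some I' → i ∉ aset I → i ∉ aset I' → (∀ v ∈ S, i ∈ alpha v) →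
        r n (G \ S) I = some I') ∧
  (∀ (n : ℕ) (G I : Finset (Node n k)) (i : Fin n) (S : Finset (Node n k)),
      r n G I = none → i ∉ aset I → (∀ v ∈ S, i ∈ alpha v) →
        r n (G \ S) I = none)

/-- `Alg` is the local search algorithm characterized by the list `R` of improvement
rules: on every graph `G` its output is the end of the iterative process that starts
from `∅` and repeatedly applies the first applicable rule of `R`, halting when no rule
applies. -/
def IsLocalSearch {k : ℕ} (R : List (Rule k)) (Alg : Algorithm k) : Prop :=
  ∀ (n : ℕ) (G : Finset (Node n k)),
    ∃ (T : ℕ) (seq : ℕ → Finset (Node n k)),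
      seq 0 = ∅ ∧
      (∀ t : ℕ, t < T → R.findSome? (fun r => r n G (seq t)) = some (seq (t + 1))) ∧
      R.findSome? (fun r => r n G (seq T)) = none ∧
      Alg n G = seq T

end MaxCGIS

/-!
Loyalty makes the agent sets grow along the search, so an agent absent from the output never
partakes in any intermediate solution. By INPA of the rules, every step of the search on `G`,
including the final halting one, is then also a step of the search on `G \ S`, so both
searches follow the same trajectory.
-/

section HaltingRun

variable {α β : Type*}

def IsHaltingRun (f : α → Option α) (s : ℕ → α) (T : ℕ) : Prop :=
  (∀ t < T, f (s t) = some (s (t + 1))) ∧ f (s T) = none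

variable {f g : α → Option α} {s s' : ℕ → α} {T T' : ℕ}

theorem IsHaltingRun.lt_and_succ_eq_of_eq_some (hs : IsHaltingRun f s T) {t : ℕ} {y : α}
    (ht : t ≤ T) (h : f (s t) = some y) : t < T ∧ s (t + 1) = y := by
  have htT : t < T := ht.lt_of_ne (by rintro rfl; simp [hs.2] at h)
  exact ⟨htT, Option.some_injective _ ((hs.1 t htT).symm.trans h)⟩

theorem IsHaltingRun.map_le_map_final [Preorder β] {φ : α → β}
    (hφ : ∀ x y, f x = some y → φ x ≤ φ y) (hs : IsHaltingRun f s T) {t : ℕ} (ht : t ≤ T) :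
    φ (s t) ≤ φ (s T) := by
  suffices ∀ m, t ≤ m → m ≤ T → φ (s t) ≤ φ (s m) from this T ht le_rfl
  intro m htm
  induction m, htm using Nat.le_induction with
  | base => exact fun _ => le_rfl
  | succ m _ ih => exact fun hm => (ih (by omega)).trans (hφ _ _ (hs.1 m hm))

theorem IsHaltingRun.final_eq (hs : IsHaltingRun f s T) (hs' : IsHaltingRun g s' T')
    (h0 : s' 0 = s 0) (hgf : ∀ t ≤ T, g (s t) = f (s t)) : s' T' = s T := by
  have agree : ∀ t ≤ T', t ≤ T ∧ s' t = s t := by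
    intro t
    induction t with
    | zero => exact fun _ => ⟨Nat.zero_le T, h0⟩
    | succ t ih =>
      intro ht
      obtain ⟨htT, hst⟩ := ih (by omega)
      have hstep : f (s t) = some (s' (t + 1)) := by rw [← hgf t htT, ← hst, hs'.1 t ht]
      obtain ⟨htT', hsucc⟩ := hs.lt_and_succ_eq_of_eq_some htT hstep
      exact ⟨htT', hsucc.symm⟩
  obtain ⟨hT'T, hfinal⟩ := agree T' le_rfl
  obtain rfl : T' = T := by
    refine hT'T.antisymm (not_lt.1 fun hlt => ?_)
    have halt := hs'.2
    rw [hfinal, hgf T' hT'T, hs.1 T' hlt] at halt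
    exact Option.some_ne_none _ halt
  exact hfinal

end HaltingRun

theorem List.findSome?_eq_some_of_imp {α β : Type*} {l : List α} {f g : α → Option β} {b : β}
    (h : l.findSome? f = some b) (hnone : ∀ a ∈ l, f a = none → g a = none)
    (hsome : ∀ a ∈ l, f a = some b → g a = some b) : l.findSome? g = some b := by
  obtain ⟨l₁, a, l₂, rfl, ha, hl₁⟩ := List.findSome?_eq_some_iff.1 h
  exact List.findSome?_eq_some_iff.2
    ⟨l₁, a, l₂, rfl, hsome a (by simp) ha, fun x hx => hnone x (by simp [hx]) (hl₁ x hx)⟩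

namespace MaxCGIS

section LocalSearch

variable {k n : ℕ} {R : List (Rule k)}

def searchStep (R : List (Rule k)) (n : ℕ) (G I : Finset (Node n k)) :
    Option (Finset (Node n k)) :=
  R.findSome? (fun r => r n G I)

theorem IsLocalSearch.exists_isHaltingRun {Alg : Algorithm k} (hAlg : IsLocalSearch R Alg)
    (n : ℕ) (G : Finset (Node n k)) :
    ∃ (T : ℕ) (s : ℕ → Finset (Node n k)),
      s 0 = ∅ ∧ IsHaltingRun (searchStep R n G) s T ∧ Alg n G = s T := by
  obtain ⟨T, s, h0, hstep, hhalt, hout⟩ := hAlg n G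
  exact ⟨T, s, h0, ⟨hstep, hhalt⟩, hout⟩

theorem aset_subset_of_searchStep_eq_some (hloyal : ∀ r ∈ R, LoyalRule r)
    {G I I' : Finset (Node n k)} (h : searchStep R n G I = some I') : aset I ⊆ aset I' := by
  obtain ⟨r, hr, hrI⟩ := List.exists_of_findSome?_eq_some h
  exact hloyal r hr n G I I' hrI

theorem searchStep_sdiff_eq (hinpa : ∀ r ∈ R, INPARule r) {G I S : Finset (Node n k)}
    {i : Fin n} (hS : ∀ v ∈ S, i ∈ alpha v) (hI : i ∉ aset I)
    (hI' : ∀ I', searchStep R n G I = some I' → i ∉ aset I') :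
    searchStep R n (G \ S) I = searchStep R n G I := by
  cases h : searchStep R n G I with
  | none =>
    exact List.findSome?_eq_none_iff.2 fun r hr =>
      (hinpa r hr).2 n G I i S (List.findSome?_eq_none_iff.1 h r hr) hI hS
  | some I' =>
    exact List.findSome?_eq_some_of_imp h
      (fun r hr hnone => (hinpa r hr).2 n G I i S hnone hI hS)
      fun r hr hsome => (hinpa r hr).1 n G I I' i S hsome hI (hI' I' h) hS

end LocalSearch

theorem localSearch_inpa_general
    (k : ℕ)
    (R : List (Rule k))
    (hloyal : ∀ r ∈ R, LoyalRule r)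
    (hinpa : ∀ r ∈ R, INPARule r)
    (Alg : Algorithm k) (hAlg : IsLocalSearch R Alg) :
    INPAAlg Alg := by
  intro n G i hi S hS
  obtain ⟨T, s, hs0, hs, hout⟩ := hAlg.exists_isHaltingRun n G
  obtain ⟨T', s', hs0', hs', hout'⟩ := hAlg.exists_isHaltingRun n (G \ S)
  rw [hout] at hi ⊢
  rw [hout']
  have hi_run : ∀ t ≤ T, i ∉ aset (s t) := fun t ht hit =>
    hi (hs.map_le_map_final (fun _ _ => aset_subset_of_searchStep_eq_some hloyal) ht hit)
  refine hs.final_eq hs' (hs0'.trans hs0.symm) fun t ht =>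
    searchStep_sdiff_eq hinpa hS (hi_run t ht) fun I' hI' => ?_
  obtain ⟨htT, rfl⟩ := hs.lt_and_succ_eq_of_eq_some ht hI'
  exact hi_run (t + 1) htT

/-- Lemma: local search with loyal INPA rules is INPA.
If every improvement rule in `R` is (a valid improvement rule that is) loyal and INPA,
then the local search algorithm characterized by `R` is INPA. -/
theorem localSearch_inpa
    (k : ℕ) (hk : 2 ≤ k) (lam : ℕ → ℝ) (hlam : IsLengthFunction k lam)
    (R : List (Rule k))
    (hvalid : ∀ r ∈ R, ValidRule lam r)
    (hloyal : ∀ r ∈ R, LoyalRule r)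
    (hinpa : ∀ r ∈ R, INPARule r)
    (Alg : Algorithm k) (hAlg : IsLocalSearch R Alg) :
    INPAAlg Alg :=
  localSearch_inpa_general k R hloyal hinpa Alg hAlg

end MaxCGIS
end

section
/- Let Alg_1 be a truthful INPA (k,λ)-maxCGIS algorithm and let Alg_2 be a truthful (k,λ)-maxCGIS algorithm such that Alg_1 ⪰ Alg_2. Then the concatenated algorithm Alg_1 · Alg_2 is truthful. -/
/-!
The `(k,λ)`-maxCGIS framework of Emek–Shpiro, "Barter Exchange with Bounded Trading
Cycles".  A potential node over `[n]` is a cyclic order of between `2` and `k` distinct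
agents, formalized as a cyclic permutation of `Fin n` whose support has size in `[2,k]`;
its agent set `α(c)` is the support.  A `k`-cycle graph is identified with a finite set
of potential nodes, two distinct nodes being adjacent iff their agent sets intersect,
and `G[V∖S]` is the graph on node set `V ∖ S`.
-/

open Finset

namespace MaxCGIS

/-- The neighborhood `N_G(U)` of `U` within the graph `G`: all nodes of `G` adjacent to
some node of `U`. -/
def nbhd {n k : ℕ} (G U : Finset (Node n k)) : Finset (Node n k) :=
  G.filter (fun v => ∃ u ∈ U, v ≠ u ∧ (alpha u ∩ alpha v).Nonempty)

/-- The concatenation `Alg₁ · Alg₂`: run `Alg₁` on `G`, then expand its output by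
running `Alg₂` on the graph obtained by removing `Alg₁(G)` and its neighbors. -/
def concat {k : ℕ} (Alg1 Alg2 : Algorithm k) : Algorithm k :=
  fun n G => Alg1 n G ∪ Alg2 n (G \ (Alg1 n G ∪ nbhd G (Alg1 n G)))

/-- `Alg₁ ⪰ Alg₂`: the maximum node length ever output by `Alg₁` is at most the minimum
node length ever output by `Alg₂`. -/
def Precedes {k : ℕ} (Alg1 Alg2 : Algorithm k) : Prop :=
  ∀ (n₁ : ℕ) (G₁ : Finset (Node n₁ k)), ∀ v₁ ∈ Alg1 n₁ G₁,
    ∀ (n₂ : ℕ) (G₂ : Finset (Node n₂ k)), ∀ v₂ ∈ Alg2 n₂ G₂,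
      (alpha v₁).card ≤ (alpha v₂).card

lemma lam_pos {n k : ℕ} {lam : ℕ → ℝ} (hlam : IsLengthFunction k lam) (v : Node n k) :
    0 < lam (alpha v).card :=
  (hlam.1 _ v.2.2.1 v.2.2.2).1

lemma util_nonneg {n k : ℕ} {lam : ℕ → ℝ} (hlam : IsLengthFunction k lam)
    (i : Fin n) (I : Finset (Node n k)) : 0 ≤ util lam i I :=
  Finset.sum_nonneg fun v _ => (lam_pos hlam v).le

lemma util_union {n k : ℕ} (lam : ℕ → ℝ) (i : Fin n) {A B : Finset (Node n k)}
    (h : Disjoint A B) : util lam i (A ∪ B) = util lam i A + util lam i B := by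
  unfold util
  rw [Finset.filter_union, Finset.sum_union (Finset.disjoint_filter_filter h)]

lemma util_of_not_mem {n k : ℕ} (lam : ℕ → ℝ) {i : Fin n} {I : Finset (Node n k)}
    (h : i ∉ aset I) : util lam i I = 0 := by
  unfold util
  rw [Finset.filter_false_of_mem, Finset.sum_empty]
  intro v hv hvi
  exact h (Finset.mem_biUnion.2 ⟨v, hv, hvi⟩)

lemma util_of_mem {n k : ℕ} (lam : ℕ → ℝ) {i : Fin n} {I : Finset (Node n k)}
    (hI : Indep I) {v : Node n k} (hv : v ∈ I) (hiv : i ∈ alpha v) :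
    util lam i I = lam (alpha v).card := by
  unfold util
  have : I.filter (fun u => i ∈ alpha u) = {v} := by
    ext u
    simp only [Finset.mem_filter, Finset.mem_singleton]
    constructor
    · rintro ⟨hu, hiu⟩
      by_contra hne
      have := hI u hu v hv hne
      have : i ∈ alpha u ∩ alpha v := Finset.mem_inter.2 ⟨hiu, hiv⟩
      simp_all
    · rintro rfl; exact ⟨hv, hiv⟩
  rw [this, Finset.sum_singleton]

/-- Lemma: concatenation preserves truthfulness.
If `Alg₁` is a truthful INPA `(k,λ)`-maxCGIS algorithm, `Alg₂` is a truthful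
`(k,λ)`-maxCGIS algorithm, and `Alg₁ ⪰ Alg₂`, then `Alg₁ · Alg₂` is truthful. -/
theorem concat_truthful
    (k : ℕ) (hk : 2 ≤ k) (lam : ℕ → ℝ) (hlam : IsLengthFunction k lam)
    (Alg1 Alg2 : Algorithm k)
    (h1 : IsAlgorithm Alg1) (h2 : IsAlgorithm Alg2)
    (ht1 : TruthfulAlg lam Alg1) (hinpa1 : INPAAlg Alg1)
    (ht2 : TruthfulAlg lam Alg2)
    (hprec : Precedes Alg1 Alg2) :
    TruthfulAlg lam (concat Alg1 Alg2) := by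
  intro n G i S hS
  set A1 : Finset (Node n k) := Alg1 n G with hA1def
  set A1' : Finset (Node n k) := Alg1 n (G \ S) with hA1'def
  set H : Finset (Node n k) := G \ (A1 ∪ nbhd G A1) with hHdef
  set H' : Finset (Node n k) := (G \ S) \ (A1' ∪ nbhd (G \ S) A1') with hH'def
  have hconcatG : concat Alg1 Alg2 n G = A1 ∪ Alg2 n H := rfl
  have hconcatGS : concat Alg1 Alg2 n (G \ S) = A1' ∪ Alg2 n H' := rfl
  -- disjointness of the two parts
  have hdisj : Disjoint A1 (Alg2 n H) := by
    refine Finset.disjoint_left.2 fun v hv hv2 => ?_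
    have : v ∈ H := (h2 n H).1 hv2
    rw [hHdef] at this
    exact (Finset.mem_sdiff.1 this).2 (Finset.mem_union_left _ hv)
  have hdisj' : Disjoint A1' (Alg2 n H') := by
    refine Finset.disjoint_left.2 fun v hv hv2 => ?_
    have : v ∈ H' := (h2 n H').1 hv2
    rw [hH'def] at this
    exact (Finset.mem_sdiff.1 this).2 (Finset.mem_union_left _ hv)
  rw [hconcatG, hconcatGS, util_union lam i hdisj, util_union lam i hdisj']
  by_cases hA1'i : i ∈ aset A1'
  · -- i partakes in Alg1(G\S): then no node of Alg2 H' contains i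
    obtain ⟨v', hv', hiv'⟩ := Finset.mem_biUnion.1 hA1'i
    have hz : util lam i (Alg2 n H') = 0 := by
      apply util_of_not_mem
      intro hmem
      obtain ⟨u, hu, hiu⟩ := Finset.mem_biUnion.1 hmem
      have huH' : u ∈ H' := (h2 n H').1 hu
      rw [hH'def, Finset.mem_sdiff] at huH'
      obtain ⟨huGS, hunot⟩ := huH'
      have hne : u ≠ v' := by
        rintro rfl; exact hunot (Finset.mem_union_left _ hv')
      exact hunot (Finset.mem_union_right _ (Finset.mem_filter.2
        ⟨huGS, v', hv', hne, ⟨i, Finset.mem_inter.2 ⟨hiv', hiu⟩⟩⟩))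
    rw [hz, add_zero]
    calc util lam i A1' ≤ util lam i A1 := ht1 n G i S hS
      _ ≤ util lam i A1 + util lam i (Alg2 n H) := by
          linarith [util_nonneg hlam i (Alg2 n H)]
  · -- i does not partake in Alg1(G\S)
    have hz' : util lam i A1' = 0 := util_of_not_mem lam hA1'i
    rw [hz', zero_add]
    by_cases hA1i : i ∈ aset A1
    · -- i partakes in Alg1(G): compare node lengths via Precedes
      obtain ⟨v, hv, hiv⟩ := Finset.mem_biUnion.1 hA1i
      have hutilA1 : util lam i A1 = lam (alpha v).card :=
        util_of_mem lam (h1 n G).2 hv hiv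
      have hle : util lam i (Alg2 n H') ≤ lam (alpha v).card := by
        by_cases hmem : i ∈ aset (Alg2 n H')
        · obtain ⟨u, hu, hiu⟩ := Finset.mem_biUnion.1 hmem
          rw [util_of_mem lam (h2 n H').2 hu hiu]
          exact hlam.2 _ _ v.2.2.1 (hprec n G v hv n H' u hu) u.2.2.2
        · rw [util_of_not_mem lam hmem]
          exact (lam_pos hlam v).le
      calc util lam i (Alg2 n H') ≤ lam (alpha v).card := hle
        _ = util lam i A1 := hutilA1.symm
        _ ≤ util lam i A1 + util lam i (Alg2 n H) := by
            linarith [util_nonneg hlam i (Alg2 n H)]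
    · -- i partakes in neither: use INPA and truthfulness of Alg2
      have hAeq : A1' = A1 := hinpa1 n G i hA1i S hS
      have hH'eq : H' = H \ S := by
        rw [hH'def, hHdef, hAeq]
        ext x
        by_cases hP : ∃ u ∈ A1, x ≠ u ∧ (alpha u ∩ alpha x).Nonempty <;>
          simp only [Finset.mem_sdiff, Finset.mem_union, nbhd, Finset.mem_filter,
            hP, eq_self_iff_true, not_true, not_false_iff] <;> tauto
      have hz : util lam i A1 = 0 := util_of_not_mem lam hA1i
      rw [hz, zero_add, hH'eq]
      have hSsub : ∀ v ∈ S ∩ H, i ∈ alpha v := fun v hv => hS v (Finset.mem_inter.1 hv).1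
      have : H \ S = H \ (S ∩ H) := by
        ext x; simp only [Finset.mem_sdiff, Finset.mem_inter]; tauto
      rw [this]
      exact ht2 n H i (S ∩ H) hSsub

end MaxCGIS
end

section
/- Let k ≥ 3 be an integer and let λ be a non-uniform length function, and let ℓ* be the largest integer 2 ≤ ℓ ≤ k − 1 with λ(ℓ) > λ(k) (which exists since λ is non-increasing and non-uniform). Then ρ(λ) > k − 1 if and only if λ(k)/λ(ℓ*) > (k − 1)/k. -/
/-- A length function is non-uniform if it strictly decreases somewhere on `{2,…,k}`. -/
def NonUniform (k : ℕ) (lam : ℕ → ℝ) : Prop :=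
  ∃ ℓ ℓ' : ℕ, 2 ≤ ℓ ∧ ℓ < ℓ' ∧ ℓ' ≤ k ∧ lam ℓ' < lam ℓ

/-- The critical ratio `ρ(λ)`: the maximum, over all pairs `2 ≤ ℓ < ℓ′ ≤ k` with
`λ(ℓ) > λ(ℓ′)`, of `max{ ℓ′·λ(ℓ′)/λ(ℓ), ((ℓ−1)/ℓ)·(ℓ′·λ(ℓ′)/λ(ℓ)) + 1 }`. -/
noncomputable def rho (k : ℕ) (lam : ℕ → ℝ) : ℝ :=
  sSup {x : ℝ |
    ∃ ℓ ℓ' : ℕ, 2 ≤ ℓ ∧ ℓ < ℓ' ∧ ℓ' ≤ k ∧ lam ℓ' < lam ℓ ∧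
      x = max ((ℓ' : ℝ) * lam ℓ' / lam ℓ)
              (((ℓ : ℝ) - 1) / (ℓ : ℝ) * ((ℓ' : ℝ) * lam ℓ' / lam ℓ) + 1)}

/-- Lemma: when the bounds match.  Let `k ≥ 3`, let `λ` be a
non-uniform length function, and let `ℓ*` be the largest `2 ≤ ℓ ≤ k − 1` with
`λ(ℓ) > λ(k)`.  Then `ρ(λ) > k − 1` if and only if `λ(k)/λ(ℓ*) > (k − 1)/k`. -/
theorem rho_gt_iff (k : ℕ) (hk : 3 ≤ k) (lam : ℕ → ℝ)
    (hlam : IsLengthFunction k lam) (hnu : NonUniform k lam)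
    (lstar : ℕ) (h2 : 2 ≤ lstar) (hlt : lstar ≤ k - 1)
    (hstar : lam k < lam lstar)
    (hmax : ∀ ℓ : ℕ, lstar < ℓ → ℓ ≤ k - 1 → ¬ lam k < lam ℓ) :
    (k : ℝ) - 1 < rho k lam ↔ ((k : ℝ) - 1) / (k : ℝ) < lam k / lam lstar := by
  obtain ⟨hpos, hmono⟩ := hlam
  have hlk : lstar < k := by omega
  have hlpos : 0 < lam lstar := (hpos lstar h2 hlk.le).1
  have hkpos : 0 < lam k := (hpos k (by omega) le_rfl).1
  have hkR : (3:ℝ) ≤ (k:ℝ) := by exact_mod_cast hk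
  set S : Set ℝ := {x : ℝ |
    ∃ ℓ ℓ' : ℕ, 2 ≤ ℓ ∧ ℓ < ℓ' ∧ ℓ' ≤ k ∧ lam ℓ' < lam ℓ ∧
      x = max ((ℓ' : ℝ) * lam ℓ' / lam ℓ)
              (((ℓ : ℝ) - 1) / (ℓ : ℝ) * ((ℓ' : ℝ) * lam ℓ' / lam ℓ) + 1)} with hSdef
  have hrho : rho k lam = sSup S := rfl
  rw [hrho]
  have hub : ∀ x ∈ S, x ≤ (k:ℝ) + 1 := by
    rintro x ⟨ℓ, ℓ', h2ℓ, hll, hl'k, hlam', rfl⟩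
    have ha : 0 < lam ℓ := (hpos ℓ h2ℓ (by omega)).1
    have hb : 0 < lam ℓ' := (hpos ℓ' (by omega) hl'k).1
    have hℓR : (2:ℝ) ≤ (ℓ:ℝ) := by exact_mod_cast h2ℓ
    have hl'R : (ℓ':ℝ) ≤ (k:ℝ) := by exact_mod_cast hl'k
    have hA : (ℓ':ℝ) * lam ℓ' / lam ℓ ≤ (ℓ':ℝ) := by
      rw [div_le_iff₀ ha]
      nlinarith [mul_le_mul_of_nonneg_left hlam'.le
        (by positivity : (0:ℝ) ≤ (ℓ':ℝ))]
    have hA0 : 0 ≤ (ℓ':ℝ) * lam ℓ' / lam ℓ := by positivity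
    apply max_le
    · linarith
    · have h1 : ((ℓ:ℝ)-1)/(ℓ:ℝ) ≤ 1 := by
        rw [div_le_one (by linarith)]; linarith
      have h0 : 0 ≤ ((ℓ:ℝ)-1)/(ℓ:ℝ) := by
        apply div_nonneg <;> linarith
      nlinarith
  have hbddS : BddAbove S := ⟨(k:ℝ)+1, hub⟩
  constructor
  · intro hρ
    by_contra hratio
    push_neg at hratio
    have hle : ∀ x ∈ S, x ≤ (k:ℝ) - 1 := by
      rintro x ⟨ℓ, ℓ', h2ℓ, hll, hl'k, hlam', rfl⟩
      have ha : 0 < lam ℓ := (hpos ℓ h2ℓ (by omega)).1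
      have hb : 0 < lam ℓ' := (hpos ℓ' (by omega) hl'k).1
      have hℓR : (2:ℝ) ≤ (ℓ:ℝ) := by exact_mod_cast h2ℓ
      have hℓk : ℓ ≤ k - 1 := by omega
      have hℓkR : (ℓ:ℝ) ≤ (k:ℝ) - 1 := by
        have : (ℓ:ℝ) + 1 ≤ (k:ℝ) := by exact_mod_cast (by omega : ℓ + 1 ≤ k)
        linarith
      have hA : (ℓ':ℝ) * lam ℓ' / lam ℓ ≤ (k:ℝ) - 1 := by
        rcases eq_or_lt_of_le hl'k with heq | hlt'
        · rw [heq] at hlam' ⊢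
          have hlle : ℓ ≤ lstar := by
            by_contra h
            exact hmax ℓ (by omega) hℓk hlam'
          have haa : lam lstar ≤ lam ℓ := hmono ℓ lstar h2ℓ hlle hlk.le
          have h1 : lam k * (k:ℝ) ≤ ((k:ℝ)-1) * lam lstar := by
            rw [div_le_div_iff₀ hlpos (by linarith : (0:ℝ) < (k:ℝ))] at hratio
            linarith
          rw [div_le_iff₀ ha]
          nlinarith
        · have hl'R : (ℓ':ℝ) ≤ (k:ℝ) - 1 := by
            have : (ℓ':ℝ) + 1 ≤ (k:ℝ) := by exact_mod_cast (by omega : ℓ' + 1 ≤ k)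
            linarith
          rw [div_le_iff₀ ha]
          nlinarith [mul_le_mul_of_nonneg_left hlam'.le
            (by positivity : (0:ℝ) ≤ (ℓ':ℝ))]
      have hA0 : 0 ≤ (ℓ':ℝ) * lam ℓ' / lam ℓ := by positivity
      apply max_le hA
      have h3 : ((ℓ:ℝ)-1)/(ℓ:ℝ) * ((ℓ':ℝ) * lam ℓ' / lam ℓ)
          = ((ℓ:ℝ)-1) * ((ℓ':ℝ) * lam ℓ' / lam ℓ) / (ℓ:ℝ) := by ring
      rw [h3, ← le_sub_iff_add_le, div_le_iff₀ (by linarith : (0:ℝ) < (ℓ:ℝ))]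
      nlinarith [mul_le_mul_of_nonneg_left hA (by linarith : (0:ℝ) ≤ (ℓ:ℝ)-1)]
    exact absurd hρ (not_lt.mpr (Real.sSup_le hle (by linarith)))
  · intro hratio
    have hmem : max ((k:ℝ) * lam k / lam lstar)
        (((lstar:ℝ)-1)/(lstar:ℝ) * ((k:ℝ) * lam k / lam lstar) + 1) ∈ S :=
      ⟨lstar, k, h2, hlk, le_rfl, hstar, rfl⟩
    have hA : (k:ℝ) - 1 < (k:ℝ) * lam k / lam lstar := by
      rw [div_lt_div_iff₀ (by linarith : (0:ℝ) < (k:ℝ)) hlpos] at hratio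
      rw [lt_div_iff₀ hlpos]
      nlinarith
    calc (k:ℝ) - 1 < (k:ℝ) * lam k / lam lstar := hA
      _ ≤ max ((k:ℝ) * lam k / lam lstar)
          (((lstar:ℝ)-1)/(lstar:ℝ) * ((k:ℝ) * lam k / lam lstar) + 1) :=
            le_max_left _ _
      _ ≤ sSup S := le_csSup hbddS hmem
end
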